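/- Let b > 0, σ > 0, let ν be a nonzero measure on (0,∞) with ∫_0^∞ (z∧1) ν(dz) < ∞, and fix t > 0. Define Δ_t(u) := ∫_0^t ∫_0^∞ (e^{zψ(s,u)} − 1) ν(dz) ds for real u ≤ 0. Then (a) the function u ↦ Δ_t(u) is strictly increasing on (−∞,−1]; and (b) for every δ > 0, e^{−uδ} e^{Δ_t(u)} → ∞ as u → −∞. -/

import Mathlib

open MeasureTheory Filter Set
open scoped ENNReal

/-!
The inner integral is `Λ(ψ(s,u))` for the cumulant `Λ(x) = ∫ (e^{zx} - 1) ν(dz)`, which on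
`x ≤ 0` is strictly increasing (as `ν ≠ 0`) and bounded by `(1 + |x|) ∫ (z ∧ 1) dν`. Since
`u ↦ ψ(s,u)` is strictly increasing with values in `[u, 0]`, part (a) follows. For (b), the
denominator of `ψ` grows linearly in `-u`, so besides `|ψ(s,u)| ≤ -u` also
`|ψ(s,u)| ≤ 2/(σ²s)`; the geometric mean `√(-u) · √2/σ · s^{-1/2}` is integrable in `s`,
giving `Δ_t(u) ≥ -C (1 + √(-u))`, which is negligible against `-uδ`.
-/

/-- `ψ(t,u) = u e^{−bt} / (1 − (σ²u/(2b))(1 − e^{−bt}))`. -/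
noncomputable def psi (b σ t u : ℝ) : ℝ :=
  u * Real.exp (-b * t) / (1 - σ ^ 2 * u / (2 * b) * (1 - Real.exp (-b * t)))

/-- The cumulant `log 𝔼 e^{x L₁}` of a driftless subordinator `L` with Lévy measure `μ`. -/
noncomputable def subordinatorCumulant (μ : Measure ℝ) (x : ℝ) : ℝ :=
  ∫ z, (Real.exp (z * x) - 1) ∂μ

lemma integral_lt_integral_of_ae_lt {α : Type*} [MeasurableSpace α] {μ : Measure α}
    {f g : α → ℝ} (hμ : μ ≠ 0) (hf : Integrable f μ) (hg : Integrable g μ)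
    (hfg : ∀ᵐ x ∂μ, f x < g x) : ∫ x, f x ∂μ < ∫ x, g x ∂μ := by
  rw [← sub_pos, ← integral_sub hg hf,
    integral_pos_iff_support_of_nonneg_ae (f := fun x => g x - f x)
      (hfg.mono fun x hx => sub_nonneg.2 hx.le) (hg.sub hf)]
  refine pos_iff_ne_zero.2 fun hnull => ?_
  have := ae_neBot.2 hμ
  obtain ⟨x, hlt, hx⟩ := (hfg.and (measure_eq_zero_iff_ae_notMem.1 hnull)).exists
  exact hx (sub_ne_zero.2 hlt.ne')

lemma abs_exp_mul_sub_one_le {x z : ℝ} (hx : x ≤ 0) (hz : 0 ≤ z) :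
    |Real.exp (z * x) - 1| ≤ (1 + |x|) * min z 1 := by
  have hzx : z * x ≤ 0 := mul_nonpos_of_nonneg_of_nonpos hz hx
  have h1 : Real.exp (z * x) ≤ 1 := Real.exp_le_one_iff.mpr hzx
  have h2 : 1 + z * x ≤ Real.exp (z * x) := by linarith [Real.add_one_le_exp (z * x)]
  rw [abs_of_nonpos (by linarith), abs_of_nonpos hx]
  rcases le_total z 1 with h | h
  · rw [min_eq_left h]; nlinarith
  · rw [min_eq_right h]; nlinarith [Real.exp_pos (z * x)]

section Cumulant

variable {μ : Measure ℝ}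

lemma abs_subordinatorCumulant_le (hpos : ∀ᵐ z ∂μ, 0 ≤ z)
    (hμ : Integrable (fun z => min z 1) μ) {x : ℝ} (hx : x ≤ 0) :
    |subordinatorCumulant μ x| ≤ (1 + |x|) * ∫ z, min z 1 ∂μ := by
  rw [← integral_const_mul]
  exact norm_integral_le_of_norm_le (f := fun z => Real.exp (z * x) - 1) (hμ.const_mul _)
    (hpos.mono fun z hz => abs_exp_mul_sub_one_le hx hz)

lemma integrable_exp_mul_sub_one (hpos : ∀ᵐ z ∂μ, 0 ≤ z)
    (hμ : Integrable (fun z => min z 1) μ) {x : ℝ} (hx : x ≤ 0) :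
    Integrable (fun z => Real.exp (z * x) - 1) μ :=
  (hμ.const_mul (1 + |x|)).mono' (by fun_prop)
    (hpos.mono fun z hz => abs_exp_mul_sub_one_le hx hz)

lemma subordinatorCumulant_strictMonoOn (hpos : ∀ᵐ z ∂μ, 0 < z)
    (hμ : Integrable (fun z => min z 1) μ) (hμ0 : μ ≠ 0) :
    StrictMonoOn (subordinatorCumulant μ) (Iic 0) := by
  intro x₁ hx₁ x₂ hx₂ hlt
  have hnonneg := hpos.mono fun _ => le_of_lt
  refine integral_lt_integral_of_ae_lt hμ0 (integrable_exp_mul_sub_one hnonneg hμ hx₁)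
    (integrable_exp_mul_sub_one hnonneg hμ hx₂) (hpos.mono fun z hz => ?_)
  gcongr

lemma continuousOn_subordinatorCumulant (hpos : ∀ᵐ z ∂μ, 0 ≤ z)
    (hμ : Integrable (fun z => min z 1) μ) (a : ℝ) :
    ContinuousOn (subordinatorCumulant μ) (Icc a 0) := by
  refine continuousOn_of_dominated (fun _ _ => by fun_prop)
    (fun x hx => hpos.mono fun z hz => ?_) (hμ.const_mul (1 + |a|))
    (ae_of_all _ fun z => by fun_prop)
  have hxa : |x| ≤ |a| := abs_le_abs_of_nonpos hx.2 hx.1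
  calc ‖Real.exp (z * x) - 1‖ ≤ (1 + |x|) * min z 1 := abs_exp_mul_sub_one_le hx.2 hz
    _ ≤ (1 + |a|) * min z 1 := by gcongr

end Cumulant

section Psi

variable {b σ s u : ℝ}

lemma one_le_psi_denom (hb : 0 < b) (hs : 0 ≤ s) (hu : u ≤ 0) :
    1 ≤ 1 - σ ^ 2 * u / (2 * b) * (1 - Real.exp (-b * s)) := by
  have he : Real.exp (-b * s) ≤ 1 := Real.exp_le_one_iff.mpr (by nlinarith)
  have hc : σ ^ 2 * u / (2 * b) ≤ 0 :=
    div_nonpos_of_nonpos_of_nonneg (by nlinarith [sq_nonneg σ]) (by linarith)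
  nlinarith

lemma psi_nonpos (hb : 0 < b) (hs : 0 ≤ s) (hu : u ≤ 0) : psi b σ s u ≤ 0 :=
  div_nonpos_of_nonpos_of_nonneg (by nlinarith [Real.exp_pos (-b * s)])
    (by linarith [one_le_psi_denom (σ := σ) hb hs hu])

lemma le_psi (hb : 0 < b) (hs : 0 ≤ s) (hu : u ≤ 0) : u ≤ psi b σ s u := by
  have hD := one_le_psi_denom (σ := σ) hb hs hu
  have he : Real.exp (-b * s) ≤ 1 := Real.exp_le_one_iff.mpr (by nlinarith)
  rw [psi, le_div_iff₀ (by linarith)]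
  nlinarith

lemma neg_two_div_le_psi (hb : 0 < b) (hσ : 0 < σ) (hs : 0 < s) (hu : u ≤ 0) :
    -(2 / (σ ^ 2 * s)) ≤ psi b σ s u := by
  set e := Real.exp (-b * s) with he
  -- `e^{bs} ≥ 1 + bs` gives `b s e ≤ 1 - e`
  have hbse : s * e ≤ (1 - e) / b := by
    have h := Real.add_one_le_exp (b * s)
    have hinv : Real.exp (b * s) * e = 1 := by rw [he, ← Real.exp_add]; simp
    rw [le_div_iff₀ hb]
    nlinarith [Real.exp_pos (-b * s)]
  have hD := one_le_psi_denom (σ := σ) hb hs.le hu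
  rw [psi, neg_le, ← neg_div, div_le_div_iff₀ (by linarith) (by positivity)]
  have hc : 0 ≤ σ ^ 2 * -u := by nlinarith [sq_nonneg σ]
  have key : σ ^ 2 * -u * (s * e) ≤ σ ^ 2 * -u * ((1 - e) / b) := by gcongr
  have hrw : σ ^ 2 * u / (2 * b) * (1 - e) = -(σ ^ 2 * -u * ((1 - e) / b)) / 2 := by
    field_simp
  rw [hrw]
  nlinarith

lemma psi_strictMonoOn (hb : 0 < b) (hs : 0 ≤ s) : StrictMonoOn (psi b σ s) (Iic 0) := by
  intro u₁ hu₁ u₂ hu₂ hlt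
  have hD₁ := one_le_psi_denom (σ := σ) hb hs hu₁
  have hD₂ := one_le_psi_denom (σ := σ) hb hs hu₂
  rw [psi, psi, div_lt_div_iff₀ (by linarith) (by linarith)]
  have key : u₂ * Real.exp (-b * s) * (1 - σ ^ 2 * u₁ / (2 * b) * (1 - Real.exp (-b * s)))
      - u₁ * Real.exp (-b * s) * (1 - σ ^ 2 * u₂ / (2 * b) * (1 - Real.exp (-b * s)))
      = Real.exp (-b * s) * (u₂ - u₁) := by ring
  nlinarith [mul_pos (Real.exp_pos (-b * s)) (sub_pos.mpr hlt)]

lemma continuousOn_psi (hb : 0 < b) (hu : u ≤ 0) :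
    ContinuousOn (fun s => psi b σ s u) (Ici 0) :=
  ContinuousOn.div (by fun_prop) (by fun_prop)
    fun s hs => (one_pos.trans_le (one_le_psi_denom hb hs hu)).ne'

lemma abs_psi_le_sqrt (hb : 0 < b) (hσ : 0 < σ) (hs : 0 < s) (hu : u ≤ 0) :
    |psi b σ s u| ≤ √(-u) * (√2 / σ * s ^ (-(1 / 2) : ℝ)) := by
  have hψ := psi_nonpos (σ := σ) hb hs.le hu
  have h₁ : |psi b σ s u| ≤ -u := by
    rw [abs_of_nonpos hψ]; linarith [le_psi (σ := σ) hb hs.le hu]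
  have h₂ : |psi b σ s u| ≤ 2 / (σ ^ 2 * s) := by
    rw [abs_of_nonpos hψ]; linarith [neg_two_div_le_psi hb hσ hs hu]
  have hsq : |psi b σ s u| ≤ √(-u * (2 / (σ ^ 2 * s))) :=
    Real.le_sqrt_of_sq_le (by nlinarith [abs_nonneg (psi b σ s u)])
  refine hsq.trans_eq ?_
  rw [Real.rpow_neg hs.le, ← Real.sqrt_eq_rpow, Real.sqrt_mul (by linarith),
    Real.sqrt_div' _ (by positivity), Real.sqrt_mul' _ hs.le, Real.sqrt_sq hσ.le]
  field_simp

end Psi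

section Delta

variable {b σ : ℝ} {μ : Measure ℝ}

lemma integrableOn_subordinatorCumulant_psi (hb : 0 < b) (hpos : ∀ᵐ z ∂μ, 0 ≤ z)
    (hμ : Integrable (fun z => min z 1) μ) {u : ℝ} (hu : u ≤ 0) (t : ℝ) :
    IntegrableOn (fun s => subordinatorCumulant μ (psi b σ s u)) (Ioc 0 t) := by
  have hmaps : MapsTo (fun s => psi b σ s u) (Ioc 0 t) (Icc u 0) :=
    fun s hs => ⟨le_psi hb hs.1.le hu, psi_nonpos hb hs.1.le hu⟩
  have hcont := (continuousOn_subordinatorCumulant hpos hμ u).comp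
    ((continuousOn_psi hb hu).mono fun s hs => mem_Ici.2 hs.1.le) hmaps
  refine IntegrableOn.of_bound measure_Ioc_lt_top
    (hcont.aestronglyMeasurable measurableSet_Ioc) ((1 + |u|) * ∫ z, min z 1 ∂μ)
    ((ae_restrict_iff' measurableSet_Ioc).2 (ae_of_all _ fun s hs => ?_))
  have hψ := hmaps hs
  have hA : 0 ≤ ∫ z, min z 1 ∂μ :=
    integral_nonneg_of_ae (hpos.mono fun z hz => le_min hz zero_le_one)
  calc ‖subordinatorCumulant μ (psi b σ s u)‖
      ≤ (1 + |psi b σ s u|) * ∫ z, min z 1 ∂μ := abs_subordinatorCumulant_le hpos hμ hψ.2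
    _ ≤ (1 + |u|) * ∫ z, min z 1 ∂μ := by
        have := abs_le_abs_of_nonpos hψ.2 hψ.1
        gcongr

lemma strictMonoOn_integral_subordinatorCumulant_psi (hb : 0 < b) {t : ℝ} (ht : 0 < t)
    (hpos : ∀ᵐ z ∂μ, 0 < z) (hμ : Integrable (fun z => min z 1) μ) (hμ0 : μ ≠ 0) :
    StrictMonoOn (fun u => ∫ s in Ioc 0 t, subordinatorCumulant μ (psi b σ s u)) (Iic 0) := by
  intro u₁ hu₁ u₂ hu₂ hlt
  have hnonneg := hpos.mono fun _ => le_of_lt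
  have hvol : volume.restrict (Ioc 0 t) ≠ 0 := by simpa using ht
  refine integral_lt_integral_of_ae_lt hvol
    (integrableOn_subordinatorCumulant_psi hb hnonneg hμ hu₁ t)
    (integrableOn_subordinatorCumulant_psi hb hnonneg hμ hu₂ t)
    ((ae_restrict_iff' measurableSet_Ioc).2 (ae_of_all _ fun s hs => ?_))
  exact subordinatorCumulant_strictMonoOn hpos hμ hμ0 (psi_nonpos hb hs.1.le hu₁)
    (psi_nonpos hb hs.1.le hu₂) (psi_strictMonoOn hb hs.1.le hu₁ hu₂ hlt)

lemma exists_neg_sqrt_le_integral_subordinatorCumulant_psi (hb : 0 < b) (hσ : 0 < σ)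
    (hpos : ∀ᵐ z ∂μ, 0 ≤ z) (hμ : Integrable (fun z => min z 1) μ) (t : ℝ) :
    ∃ C, ∀ u ≤ 0,
      -(C * (1 + √(-u))) ≤ ∫ s in Ioc 0 t, subordinatorCumulant μ (psi b σ s u) := by
  set A := ∫ z, min z 1 ∂μ
  set g : ℝ → ℝ := fun s => √2 / σ * s ^ (-(1 / 2) : ℝ)
  have hA : 0 ≤ A := integral_nonneg_of_ae (hpos.mono fun z hz => le_min hz zero_le_one)
  have hg : IntegrableOn g (Ioc 0 t) :=
    (intervalIntegral.intervalIntegrable_rpow' (by norm_num)).1.const_mul _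
  have hG : 0 ≤ ∫ s in Ioc 0 t, g s :=
    setIntegral_nonneg measurableSet_Ioc fun s hs => by have := hs.1; positivity
  refine ⟨A * (volume.real (Ioc 0 t) + ∫ s in Ioc 0 t, g s), fun u hu => ?_⟩
  have hpt : ∀ s ∈ Ioc 0 t,
      -(A + √(-u) * (A * g s)) ≤ subordinatorCumulant μ (psi b σ s u) := by
    intro s hs
    have hΛ := abs_subordinatorCumulant_le hpos hμ (psi_nonpos (σ := σ) hb hs.1.le hu)
    have hψ := abs_psi_le_sqrt hb hσ hs.1 hu
    nlinarith [neg_abs_le (subordinatorCumulant μ (psi b σ s u))]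
  have hconst : IntegrableOn (fun _ => A) (Ioc 0 t) := integrableOn_const measure_Ioc_lt_top.ne
  have hlow : IntegrableOn (fun s => -(A + √(-u) * (A * g s))) (Ioc 0 t) :=
    (hconst.add ((hg.const_mul A).const_mul _)).neg
  calc -(A * (volume.real (Ioc 0 t) + ∫ s in Ioc 0 t, g s) * (1 + √(-u)))
      ≤ -(A * volume.real (Ioc 0 t) + √(-u) * (A * ∫ s in Ioc 0 t, g s)) := by
        have := Real.sqrt_nonneg (-u)
        have : 0 ≤ volume.real (Ioc (0 : ℝ) t) := measureReal_nonneg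
        nlinarith [mul_nonneg hA hG, mul_nonneg hA this]
    _ = ∫ s in Ioc 0 t, -(A + √(-u) * (A * g s)) := by
        rw [integral_neg, integral_add hconst ((hg.const_mul A).const_mul _),
          setIntegral_const, smul_eq_mul, integral_const_mul (√(-u)), integral_const_mul A g,
          mul_comm A]
    _ ≤ ∫ s in Ioc 0 t, subordinatorCumulant μ (psi b σ s u) :=
        setIntegral_mono_on hlow (integrableOn_subordinatorCumulant_psi hb hpos hμ hu t)
          measurableSet_Ioc hpt

end Delta

lemma tendsto_exp_neg_mul_mul_exp_atBot {f : ℝ → ℝ} {C δ : ℝ} (hδ : 0 < δ)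
    (hf : ∀ u ≤ 0, -(C * (1 + √(-u))) ≤ f u) :
    Tendsto (fun u => Real.exp (-u * δ) * Real.exp (f u)) atBot atTop := by
  simp_rw [← Real.exp_add]
  refine Real.tendsto_exp_atTop.comp (tendsto_atTop_mono' atBot (f₁ := fun u =>
    δ / 2 * -u + -(C + C ^ 2 / (2 * δ))) ?_ ?_)
  · filter_upwards [eventually_le_atBot 0] with u hu
    have hamgm : C * √(-u) ≤ δ / 2 * √(-u) ^ 2 + C ^ 2 / (2 * δ) := by
      have h : (C * √(-u) - δ / 2 * √(-u) ^ 2) * (2 * δ) ≤ C ^ 2 := by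
        nlinarith [sq_nonneg (δ * √(-u) - C)]
      linarith [(le_div_iff₀ (by positivity : (0 : ℝ) < 2 * δ)).2 h]
    rw [Real.sq_sqrt (neg_nonneg.2 hu)] at hamgm
    nlinarith [hf u hu]
  · exact tendsto_atTop_add_const_right _ _
      (tendsto_neg_atBot_atTop.const_mul_atTop (half_pos hδ))

theorem Delta_strictMono_and_blowup_general (b σ t : ℝ) (hb : 0 < b) (hσ : 0 < σ) (ht : 0 < t)
    (ν : Measure ℝ) (hν0 : ν (Set.Ioi 0) ≠ 0)
    (hν : ∫⁻ z in Set.Ioi (0 : ℝ), ENNReal.ofReal (min z 1) ∂ν < ⊤) :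
    StrictMonoOn
        (fun u : ℝ => ∫ s in Set.Ioc (0 : ℝ) t,
          ∫ z in Set.Ioi (0 : ℝ), (Real.exp (z * psi b σ s u) - 1) ∂ν)
        (Set.Iic (-1 : ℝ)) ∧
      ∀ δ : ℝ, 0 < δ →
        Filter.Tendsto
          (fun u : ℝ => Real.exp (-u * δ) *
            Real.exp (∫ s in Set.Ioc (0 : ℝ) t,
              ∫ z in Set.Ioi (0 : ℝ), (Real.exp (z * psi b σ s u) - 1) ∂ν))
          Filter.atBot Filter.atTop := by
  set μ := ν.restrict (Ioi 0)
  have hpos : ∀ᵐ z ∂μ, 0 < z := ae_restrict_mem measurableSet_Ioi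
  have hμ0 : μ ≠ 0 := by simpa [μ] using hν0
  have hμ : Integrable (fun z => min z 1) μ :=
    ⟨by fun_prop,
      (hasFiniteIntegral_iff_ofReal (hpos.mono fun z hz => le_min hz.le zero_le_one)).2 hν⟩
  refine ⟨(strictMonoOn_integral_subordinatorCumulant_psi hb ht hpos hμ hμ0).mono
    (Iic_subset_Iic.2 (by norm_num)), fun δ hδ => ?_⟩
  obtain ⟨C, hC⟩ := exists_neg_sqrt_le_integral_subordinatorCumulant_psi hb hσ
    (hpos.mono fun _ => le_of_lt) hμ t
  exact tendsto_exp_neg_mul_mul_exp_atBot hδ hC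

theorem Delta_strictMono_and_blowup (b σ t : ℝ) (hb : 0 < b) (hσ : 0 < σ) (ht : 0 < t)
    (ν : Measure ℝ) (hνsupp : ν (Set.Iic 0) = 0) (hν0 : ν (Set.Ioi 0) ≠ 0)
    (hν : ∫⁻ z in Set.Ioi (0 : ℝ), ENNReal.ofReal (min z 1) ∂ν < ⊤) :
    StrictMonoOn
        (fun u : ℝ => ∫ s in Set.Ioc (0 : ℝ) t,
          ∫ z in Set.Ioi (0 : ℝ), (Real.exp (z * psi b σ s u) - 1) ∂ν)
        (Set.Iic (-1 : ℝ)) ∧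
      ∀ δ : ℝ, 0 < δ →
        Filter.Tendsto
          (fun u : ℝ => Real.exp (-u * δ) *
            Real.exp (∫ s in Set.Ioc (0 : ℝ) t,
              ∫ z in Set.Ioi (0 : ℝ), (Real.exp (z * psi b σ s u) - 1) ∂ν))
          Filter.atBot Filter.atTop :=
  Delta_strictMono_and_blowup_general b σ t hb hσ ht ν hν0 hν
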